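/- arXiv:2406.05165 — 4 statements merged into one kernel-verified Lean document; each statement's English description precedes it below -/
import Mathlib

section
/- For γ > 0 and R with 0 ≤ R < log(1+γ), the error exponent θ(R) := sup_{ρ∈[0,1]} {ρ log(1 + γ/(1+ρ)) − ρR} is strictly positive. -/
open Real

theorem error_exponent_positive
    (γ R : ℝ) (hγ : 0 < γ) (hR0 : 0 ≤ R) (hR : R < Real.log (1 + γ)) :
    0 < sSup ((fun ρ : ℝ => ρ * Real.log (1 + γ / (1 + ρ)) - ρ * R) ''
      Set.Icc (0 : ℝ) 1) := by
  set f : ℝ → ℝ := fun ρ : ℝ => ρ * Real.log (1 + γ / (1 + ρ)) - ρ * R with hf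
  -- boundedness
  have hcont : ContinuousOn f (Set.Icc (0 : ℝ) 1) := by
    apply ContinuousOn.sub
    · apply ContinuousOn.mul continuousOn_id
      apply ContinuousOn.log
      · apply ContinuousOn.add continuousOn_const
        apply ContinuousOn.div continuousOn_const
        · exact (continuous_const.add continuous_id).continuousOn
        · intro x hx; have := hx.1; nlinarith
      · intro x hx
        have hx1 : (0:ℝ) < 1 + x := by nlinarith [hx.1]
        have : 0 < γ / (1 + x) := div_pos hγ hx1
        nlinarith
    · exact (continuous_id.mul continuous_const).continuousOn
  have hbdd : BddAbove (f '' Set.Icc (0:ℝ) 1) :=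
    (isCompact_Icc.image_of_continuousOn hcont).bddAbove
  -- choose a witness ρ
  set c : ℝ := Real.exp R - 1 with hc
  have hc0 : 0 ≤ c := by
    have := Real.one_le_exp hR0
    simp [hc]; linarith
  have hcγ : c < γ := by
    have h1 : Real.exp R < Real.exp (Real.log (1 + γ)) := Real.exp_lt_exp.mpr hR
    rw [Real.exp_log (by linarith)] at h1
    simp [hc]; linarith
  set ρ : ℝ := min 1 ((γ - c) / (γ + 1)) with hρ
  have hρ0 : 0 < ρ := by
    apply lt_min one_pos
    apply div_pos (by linarith) (by linarith)
  have hρ1 : ρ ≤ 1 := min_le_left _ _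
  have hρle : ρ * (γ + 1) ≤ γ - c := by
    have := min_le_right (1:ℝ) ((γ - c) / (γ + 1))
    calc ρ * (γ + 1) ≤ ((γ - c) / (γ + 1)) * (γ + 1) := by
          apply mul_le_mul_of_nonneg_right this (by linarith)
      _ = γ - c := by field_simp
  have h1ρ : (0:ℝ) < 1 + ρ := by linarith
  have hkey : c < γ / (1 + ρ) := by
    rw [lt_div_iff₀ h1ρ]
    have h2 : c * (ρ * (γ + 1)) ≤ c * (γ - c) := mul_le_mul_of_nonneg_left hρle hc0
    nlinarith
  have hpos' : (0:ℝ) < 1 + γ / (1 + ρ) := by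
    have : 0 < γ / (1 + ρ) := div_pos hγ h1ρ
    linarith
  have hRlt : R < Real.log (1 + γ / (1 + ρ)) := by
    rw [Real.lt_log_iff_exp_lt hpos']
    have : Real.exp R = c + 1 := by simp [hc]
    linarith
  have hfρ : 0 < f ρ := by
    have : f ρ = ρ * (Real.log (1 + γ / (1 + ρ)) - R) := by ring
    rw [this]
    exact mul_pos hρ0 (by linarith)
  exact lt_of_lt_of_le hfρ (le_csSup hbdd ⟨ρ, ⟨hρ0.le, hρ1⟩, rfl⟩)
end

section
/- The shadowed-Rician density f(x) = α e^{−βx} ₁F₁(m; 1; δx) on (0,∞), with α = (1/(2b))(2bm/(2bm+Ω))^m, β = 1/(2b), δ = Ω/(2b(2bm+Ω)), b > 0, Ω > 0, m > 0 and δ < β, integrates to 1 when m is a positive integer. -/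
/-!
Expand `₁F₁(m; 1; δx)` into its power series and integrate term by term against `e^{-βx}`; this
is legitimate because `|δ| < β` makes the series of integrals of absolute values converge. Since
`∫₀^∞ xᵏ e^{-βx} dx = k!/β^{k+1}`, the integral becomes `β⁻¹ ∑ (m)ₖ/k! (δ/β)ᵏ = β⁻¹ (1 - δ/β)^{-m}`
by the binomial series, and for the shadowed-Rician parameters `α = β (1 - δ/β)^m`.
-/

open MeasureTheory Real

/-- The confluent hypergeometric function ₁F₁(m; 1; z) as a series,
using (1)_k = k! so the coefficient is (m)_k / (k!)². -/
noncomputable def hyp1F1 (m : ℝ) (z : ℝ) : ℝ :=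
  ∑' k : ℕ, (ascPochhammer ℝ k).eval m / ((k.factorial : ℝ) ^ 2) * z ^ k

open scoped Nat

lemma ascPochhammer_eval_div_factorial (a : ℝ) (n : ℕ) :
    (ascPochhammer ℝ n).eval a / n ! = Ring.choose (a + n - 1) n := by
  rw [← Ring.multichoose_eq, ← Polynomial.ascPochhammer_smeval_eq_eval,
    ← Ring.factorial_nsmul_multichoose_eq_ascPochhammer, nsmul_eq_mul]
  field_simp

lemma hasSum_ascPochhammer_eval_div_factorial_mul_pow (a : ℝ) {r : ℝ} (hr : |r| < 1) :
    HasSum (fun n ↦ (ascPochhammer ℝ n).eval a / n ! * r ^ n) (1 / (1 - r) ^ a) := by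
  have := (one_div_one_sub_rpow_hasFPowerSeriesOnBall_zero a).hasSum
    (y := r) (by simpa [enorm_eq_nnnorm, ← NNReal.coe_lt_one] using hr)
  simpa [FormalMultilinearSeries.ofScalars_apply_eq, ascPochhammer_eval_div_factorial,
    mul_comm] using this

lemma integral_pow_mul_exp_neg_mul_Ioi (k : ℕ) {β : ℝ} (hβ : 0 < β) :
    ∫ x in Set.Ioi (0 : ℝ), x ^ k * exp (-β * x) = k ! / β ^ (k + 1) := by
  have h := integral_rpow_mul_exp_neg_mul_Ioi (a := k + 1) (by positivity) hβ
  simp only [add_sub_cancel_right, rpow_natCast, ← neg_mul] at h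
  rw [h, Gamma_nat_eq_factorial, ← Nat.cast_succ, rpow_natCast, div_pow, one_pow,
    one_div_mul_eq_div]

lemma integrableOn_pow_mul_exp_neg_mul_Ioi (k : ℕ) {β : ℝ} (hβ : 0 < β) :
    IntegrableOn (fun x ↦ x ^ k * exp (-β * x)) (Set.Ioi 0) :=
  .of_integral_ne_zero <| by rw [integral_pow_mul_exp_neg_mul_Ioi k hβ]; positivity

lemma ascPochhammer_eval_nonneg {S : Type*} [Semiring S] [PartialOrder S] [IsStrictOrderedRing S]
    (n : ℕ) {s : S} (hs : 0 ≤ s) : 0 ≤ (ascPochhammer S n).eval s := by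
  rcases hs.eq_or_lt with rfl | hs
  · rw [ascPochhammer_eval_zero]; split_ifs <;> simp
  · exact (ascPochhammer_pos n s hs).le

noncomputable def hyp1F1Term (m : ℝ) (k : ℕ) (z : ℝ) : ℝ :=
  (ascPochhammer ℝ k).eval m / (k ! : ℝ) ^ 2 * z ^ k

lemma hyp1F1_eq_tsum (m z : ℝ) : hyp1F1 m z = ∑' k, hyp1F1Term m k z := rfl

lemma exp_neg_mul_mul_hyp1F1Term (β m δ : ℝ) (k : ℕ) (x : ℝ) :
    exp (-β * x) * hyp1F1Term m k (δ * x)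
      = (ascPochhammer ℝ k).eval m / (k ! : ℝ) ^ 2 * δ ^ k * (x ^ k * exp (-β * x)) := by
  rw [hyp1F1Term]; ring

lemma integrableOn_exp_neg_mul_mul_hyp1F1Term {β : ℝ} (hβ : 0 < β) (m δ : ℝ) (k : ℕ) :
    IntegrableOn (fun x ↦ exp (-β * x) * hyp1F1Term m k (δ * x)) (Set.Ioi 0) := by
  simp_rw [exp_neg_mul_mul_hyp1F1Term]
  exact (integrableOn_pow_mul_exp_neg_mul_Ioi k hβ).const_mul _

lemma integral_exp_neg_mul_mul_hyp1F1Term {β : ℝ} (hβ : 0 < β) (m δ : ℝ) (k : ℕ) :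
    ∫ x in Set.Ioi (0 : ℝ), exp (-β * x) * hyp1F1Term m k (δ * x)
      = β⁻¹ * ((ascPochhammer ℝ k).eval m / k ! * (δ / β) ^ k) := by
  simp_rw [exp_neg_mul_mul_hyp1F1Term, integral_const_mul,
    integral_pow_mul_exp_neg_mul_Ioi k hβ, div_pow]
  field_simp
  ring

lemma norm_hyp1F1Term {m : ℝ} (hm : 0 ≤ m) (k : ℕ) {z : ℝ} :
    ‖hyp1F1Term m k z‖ = hyp1F1Term m k |z| := by
  simp [hyp1F1Term, abs_of_nonneg (ascPochhammer_eval_nonneg k hm)]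

theorem integral_exp_neg_mul_mul_hyp1F1 {m β δ : ℝ} (hm : 0 ≤ m) (hβ : 0 < β) (hδ : |δ| < β) :
    ∫ x in Set.Ioi (0 : ℝ), exp (-β * x) * hyp1F1 m (δ * x) = β⁻¹ * (1 / (1 - δ / β) ^ m) := by
  have hratio {d : ℝ} (hd : |d| < β) : |d / β| < 1 := by
    rwa [abs_div, abs_of_pos hβ, div_lt_one hβ]
  have hsum := hasSum_integral_of_summable_integral_norm
    (integrableOn_exp_neg_mul_mul_hyp1F1Term hβ m δ) ?_
  · simp_rw [integral_exp_neg_mul_mul_hyp1F1Term hβ, tsum_mul_left, ← hyp1F1_eq_tsum] at hsum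
    exact hsum.unique ((hasSum_ascPochhammer_eval_div_factorial_mul_pow m (hratio hδ)).mul_left _)
  · have hnorm (k : ℕ) : ∫ x in Set.Ioi (0 : ℝ), ‖exp (-β * x) * hyp1F1Term m k (δ * x)‖
        = ∫ x in Set.Ioi (0 : ℝ), exp (-β * x) * hyp1F1Term m k (|δ| * x) := by
      refine setIntegral_congr_fun measurableSet_Ioi fun x (hx : 0 < x) ↦ ?_
      rw [norm_mul, norm_hyp1F1Term hm, norm_of_nonneg (exp_pos _).le, abs_mul, abs_of_pos hx]
    simp_rw [hnorm, integral_exp_neg_mul_mul_hyp1F1Term hβ]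
    exact ((hasSum_ascPochhammer_eval_div_factorial_mul_pow m
      (hratio (by rwa [abs_abs]))).mul_left _).summable

theorem shadowed_rician_density_integrates_to_one
    (b Ω : ℝ) (m : ℕ) (hb : 0 < b) (hΩ : 0 < Ω) (hm : 0 < m)
    (α β δ : ℝ)
    (hα : α = (1 / (2 * b)) * (2 * b * m / (2 * b * m + Ω)) ^ (m : ℕ))
    (hβ : β = 1 / (2 * b))
    (hδ : δ = Ω / (2 * b * (2 * b * m + Ω))) :
    ∫ x in Set.Ioi (0 : ℝ),
        α * Real.exp (-β * x) * hyp1F1 (m : ℝ) (δ * x) = 1 := by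
  have hbm : 0 < 2 * b * m := by positivity
  have hβ_pos : 0 < β := by rw [hβ]; positivity
  have hδβ : δ / β = Ω / (2 * b * m + Ω) := by rw [hδ, hβ]; field_simp
  have hδ_lt : |δ| < β := by
    rw [abs_of_pos (by rw [hδ]; positivity), ← div_lt_one hβ_pos, hδβ, div_lt_one (by positivity)]
    linarith
  simp_rw [mul_assoc α]
  rw [integral_const_mul, integral_exp_neg_mul_mul_hyp1F1 m.cast_nonneg hβ_pos hδ_lt,
    rpow_natCast, hδβ, hα, hβ]
  field_simp
  ring
end

section
/- For fixed blocklength n ≥ 1 and rate R > 0, the normal-approximation error probability ε(γ) = Q((log(1+γ) − R)·√(n / (1 − (1+γ)^{−2}))) is strictly decreasing in γ on (0,∞). -/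
/-!
Since `gaussQ` is strictly decreasing, it suffices that its argument increases. With `u = 1 + γ`
the argument is `√n · (log u - R) · u / √(u² - 1)`, and `u / √(u² - 1)` has derivative
`-(u² - 1)^(-3/2)`, so the argument has derivative
`√n · (u² - 1 - log u + R) / (u² - 1)^(3/2)`. This is positive because
`log u ≤ u - 1 < u² - 1` for `u > 1` and `R ≥ 0`.
-/

open Real MeasureTheory

noncomputable def gaussQ (x : ℝ) : ℝ :=
  (1 / Real.sqrt (2 * Real.pi)) * ∫ t in Set.Ioi x, Real.exp (-t ^ 2 / 2)

theorem strictAnti_setIntegral_Ioi {f : ℝ → ℝ} (hf : Integrable f) (hpos : ∀ t, 0 < f t) :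
    StrictAnti fun x => ∫ t in Set.Ioi x, f t := by
  intro x y hxy
  have hsplit : ∫ t in Set.Ioi x, f t = (∫ t in x..y, f t) + ∫ t in Set.Ioi y, f t := by
    rw [intervalIntegral.integral_of_le hxy.le, ← setIntegral_union (Set.Ioc_disjoint_Ioi le_rfl)
      measurableSet_Ioi hf.integrableOn hf.integrableOn, Set.Ioc_union_Ioi_eq_Ioi hxy.le]
  have hmid : 0 < ∫ t in x..y, f t :=
    intervalIntegral.intervalIntegral_pos_of_pos hf.intervalIntegrable hpos hxy
  show ∫ t in Set.Ioi y, f t < ∫ t in Set.Ioi x, f t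
  linarith

theorem gaussQ_strictAnti : StrictAnti gaussQ := by
  have hint : Integrable fun t : ℝ => exp (-t ^ 2 / 2) := by
    simpa [neg_div, div_eq_inv_mul] using
      integrable_exp_neg_mul_sq (b := (1 / 2 : ℝ)) (by norm_num)
  intro x y hxy
  exact mul_lt_mul_of_pos_left (strictAnti_setIntegral_Ioi hint (fun t => exp_pos _) hxy)
    (by positivity)

theorem hasDerivAt_div_sqrt_sq_sub_one {u : ℝ} (hu : 1 < u) :
    HasDerivAt (fun u => u / √(u ^ 2 - 1)) (-1 / √(u ^ 2 - 1) ^ 3) u := by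
  have hw : 0 < u ^ 2 - 1 := by nlinarith
  have hs : 0 < √(u ^ 2 - 1) := sqrt_pos.2 hw
  have hsqrt : HasDerivAt (fun u => √(u ^ 2 - 1)) (2 * u / (2 * √(u ^ 2 - 1))) u := by
    simpa using ((hasDerivAt_pow 2 u).sub_const 1).sqrt hw.ne'
  refine ((hasDerivAt_id' u).div hsqrt hs.ne').congr_deriv ?_
  field_simp
  rw [sq_sqrt hw.le]
  ring

theorem strictMonoOn_log_sub_mul_div_sqrt {R : ℝ} (hR : 0 ≤ R) :
    StrictMonoOn (fun u => (log u - R) * (u / √(u ^ 2 - 1))) (Set.Ioi 1) := by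
  have hderiv : ∀ u ∈ Set.Ioi (1 : ℝ),
      HasDerivAt (fun u => (log u - R) * (u / √(u ^ 2 - 1)))
      ((u ^ 2 - 1 - log u + R) / √(u ^ 2 - 1) ^ 3) u := by
    intro u (hu : 1 < u)
    have hw : 0 < u ^ 2 - 1 := by nlinarith
    refine (((hasDerivAt_log (by positivity)).sub_const R).mul
      (hasDerivAt_div_sqrt_sq_sub_one hu)).congr_deriv ?_
    have hs : 0 < √(u ^ 2 - 1) := sqrt_pos.2 hw
    field_simp
    rw [sq_sqrt hw.le]
    ring
  refine strictMonoOn_of_hasDerivWithinAt_pos (convex_Ioi 1)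
    (f' := fun u => (u ^ 2 - 1 - log u + R) / √(u ^ 2 - 1) ^ 3)
    (fun u hu => (hderiv u hu).continuousAt.continuousWithinAt) (fun u hu => ?_) (fun u hu => ?_)
  · rw [interior_Ioi] at hu ⊢
    exact (hderiv u hu).hasDerivWithinAt
  · rw [interior_Ioi] at hu
    have hu : 1 < u := hu
    have hlog : log u < u ^ 2 - 1 := by nlinarith [log_le_sub_one_of_pos (by positivity : 0 < u)]
    have hs : 0 < √(u ^ 2 - 1) := sqrt_pos.2 (by nlinarith)
    have : 0 < u ^ 2 - 1 - log u + R := by linarith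
    positivity

theorem sqrt_div_one_sub_one_div_sq (n : ℝ) {u : ℝ} (hu : 1 < u) :
    √(n / (1 - 1 / u ^ 2)) = √n * (u / √(u ^ 2 - 1)) := by
  have hw : 0 < u ^ 2 - 1 := by nlinarith
  have hu0 : 0 < u := by linarith
  rw [show 1 - 1 / u ^ 2 = (u ^ 2 - 1) / u ^ 2 by field_simp, sqrt_div' _ (by positivity),
    sqrt_div hw.le, sqrt_sq hu0.le]
  field_simp

theorem normal_approx_error_strictly_decreasing
    (n : ℕ) (hn : 1 ≤ n) (R : ℝ) (hR : 0 < R) :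
    StrictAntiOn
      (fun γ : ℝ => gaussQ ((Real.log (1 + γ) - R) *
        Real.sqrt ((n : ℝ) / (1 - 1 / (1 + γ) ^ 2))))
      (Set.Ioi (0 : ℝ)) := by
  have hsqrt_n : 0 < √(n : ℝ) := sqrt_pos.2 (by exact_mod_cast hn)
  have harg : StrictMonoOn
      (fun γ : ℝ => (log (1 + γ) - R) * √((n : ℝ) / (1 - 1 / (1 + γ) ^ 2)))
      (Set.Ioi 0) := by
    intro a (ha : 0 < a) b (hb : 0 < b) hab
    have ha' : 1 < 1 + a := by linarith
    have hb' : 1 < 1 + b := by linarith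
    simp only [sqrt_div_one_sub_one_div_sq _ ha', sqrt_div_one_sub_one_div_sq _ hb',
      mul_left_comm _ √(n : ℝ)]
    exact mul_lt_mul_of_pos_left
      (strictMonoOn_log_sub_mul_div_sqrt hR.le ha' hb' (by linarith)) hsqrt_n
  exact gaussQ_strictAnti.comp_strictMonoOn harg
end

section
/- Union-style kernel bound for peak AoI: given positive random variables and θ > 0, the bound P(T_I + T > a) ≤ e^{−θa} E[e^{θ T_I}] · Σ_{v=1}^{u} E[e^{θ S_v}] E[e^{−θ I_v}] holds, provided T = max_{1 ≤ v ≤ u} (S_v − I_v) with T_I independent of (S_v, I_v)_v and each pair (S_v, I_v) independent. -/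
open MeasureTheory ProbabilityTheory Real

/-! If `T_I + max_v (S_v - I_v) > a` then `a ≤ T_I + (S_v - I_v)` for some `v`, so a union bound
reduces the claim to one Chernoff bound per `v`. The moment generating function of
`T_I + (S_v - I_v)` at `θ` factors by the two independence assumptions, and that of `-I_v` at `θ`
is that of `I_v` at `-θ`. -/

namespace ProbabilityTheory

variable {Ω : Type*} [MeasurableSpace Ω] {μ : Measure Ω}

theorem IndepFun.mgf_sub {X Y : Ω → ℝ} (h : IndepFun X Y μ) (hX : AEMeasurable X μ)
    (hY : AEMeasurable Y μ) (t : ℝ) : mgf (X - Y) μ t = mgf X μ t * mgf Y μ (-t) := by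
  have h_neg : IndepFun X (-Y) μ := h.comp measurable_id measurable_neg
  rw [sub_eq_add_neg, h_neg.mgf_add' hX.aestronglyMeasurable hY.neg.aestronglyMeasurable, mgf_neg]

theorem measureReal_lt_sup'_le_sum [IsFiniteMeasure μ] {ι : Type*} (s : Finset ι)
    (hs : s.Nonempty) (Z : ι → Ω → ℝ) (a : ℝ) :
    μ.real {ω | a < s.sup' hs (Z · ω)} ≤ ∑ i ∈ s, μ.real {ω | a ≤ Z i ω} := by
  have h_sub : {ω | a < s.sup' hs (Z · ω)} ⊆ ⋃ i ∈ s, {ω | a ≤ Z i ω} := by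
    intro ω (hω : a < s.sup' hs (Z · ω))
    obtain ⟨i, hi, h_lt⟩ := (Finset.lt_sup'_iff hs).mp hω
    exact Set.mem_biUnion hi h_lt.le
  exact (measureReal_mono h_sub (measure_ne_top μ _)).trans (measureReal_biUnion_finset_le s _)

end ProbabilityTheory

theorem peak_aoi_kernel_bound_general
    {Ω : Type*} [MeasurableSpace Ω] (μ : Measure Ω) [IsProbabilityMeasure μ]
    (u : ℕ)
    (T_I : Ω → ℝ) (S I : Fin u → Ω → ℝ)
    (hTI : Measurable T_I) (hS : ∀ v, Measurable (S v))
    (hI : ∀ v, Measurable (I v))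
    (hSI_indep : ∀ v, IndepFun (S v) (I v) μ)
    (hTI_indep : ∀ v, IndepFun T_I (fun ω => S v ω - I v ω) μ)
    (T : Ω → ℝ)
    (hne : (Finset.univ : Finset (Fin u)).Nonempty)
    (hT : ∀ ω, T ω = Finset.univ.sup' hne (fun v => S v ω - I v ω))
    (a θ : ℝ) (hθ : 0 < θ)
    (hintProd : ∀ v, Integrable
      (fun ω => Real.exp (θ * T_I ω) * Real.exp (θ * (S v ω - I v ω))) μ) :
    (μ {ω | T_I ω + T ω > a}).toReal ≤
      Real.exp (-θ * a) * (∫ ω, Real.exp (θ * T_I ω) ∂μ) *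
        ∑ v : Fin u, (∫ ω, Real.exp (θ * S v ω) ∂μ) *
          ∫ ω, Real.exp (-θ * I v ω) ∂μ := by
  have h_event : {ω | T_I ω + T ω > a} =
      {ω | a < Finset.univ.sup' hne fun v => (T_I + (S v - I v)) ω} := by
    ext ω
    simp only [Set.mem_ofPred_eq, gt_iff_lt, hT, Finset.add_sup', Pi.add_apply, Pi.sub_apply]
  have h_int (v : Fin u) : Integrable (fun ω => exp (θ * (T_I + (S v - I v)) ω)) μ := by
    simpa only [Pi.add_apply, Pi.sub_apply, ← exp_add, ← mul_add] using hintProd v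
  have h_mgf (v : Fin u) : mgf (T_I + (S v - I v)) μ θ =
      mgf T_I μ θ * (mgf (S v) μ θ * mgf (I v) μ (-θ)) := by
    have h_indep : IndepFun T_I (S v - I v) μ := hTI_indep v
    rw [h_indep.mgf_add' hTI.aestronglyMeasurable ((hS v).sub (hI v)).aestronglyMeasurable,
      (hSI_indep v).mgf_sub (hS v).aemeasurable (hI v).aemeasurable]
  calc (μ {ω | T_I ω + T ω > a}).toReal
      ≤ ∑ v, μ.real {ω | a ≤ (T_I + (S v - I v)) ω} := by
        rw [← measureReal_def, h_event]
        exact measureReal_lt_sup'_le_sum _ hne _ a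
    _ ≤ ∑ v, exp (-θ * a) * mgf (T_I + (S v - I v)) μ θ :=
        Finset.sum_le_sum fun v _ => measure_ge_le_exp_mul_mgf a hθ.le (h_int v)
    _ = _ := by simp only [h_mgf, Finset.mul_sum, mul_assoc]; rfl

theorem peak_aoi_kernel_bound
    {Ω : Type*} [MeasurableSpace Ω] (μ : Measure Ω) [IsProbabilityMeasure μ]
    (u : ℕ) (hu : 1 ≤ u)
    (T_I : Ω → ℝ) (S I : Fin u → Ω → ℝ)
    (hTI : Measurable T_I) (hS : ∀ v, Measurable (S v))
    (hI : ∀ v, Measurable (I v))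
    (hTInn : ∀ ω, 0 ≤ T_I ω) (hSnn : ∀ v ω, 0 ≤ S v ω)
    (hInn : ∀ v ω, 0 ≤ I v ω)
    (hSI_indep : ∀ v, IndepFun (S v) (I v) μ)
    (hTI_indep : ∀ v, IndepFun T_I (fun ω => S v ω - I v ω) μ)
    (T : Ω → ℝ)
    (hne : (Finset.univ : Finset (Fin u)).Nonempty)
    (hT : ∀ ω, T ω = Finset.univ.sup' hne (fun v => S v ω - I v ω))
    (a θ : ℝ) (ha : 0 < a) (hθ : 0 < θ)
    (hintTI : Integrable (fun ω => Real.exp (θ * T_I ω)) μ)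
    (hintS : ∀ v, Integrable (fun ω => Real.exp (θ * S v ω)) μ)
    (hintI : ∀ v, Integrable (fun ω => Real.exp (-θ * I v ω)) μ)
    (hintProd : ∀ v, Integrable
      (fun ω => Real.exp (θ * T_I ω) * Real.exp (θ * (S v ω - I v ω))) μ) :
    (μ {ω | T_I ω + T ω > a}).toReal ≤
      Real.exp (-θ * a) * (∫ ω, Real.exp (θ * T_I ω) ∂μ) *
        ∑ v : Fin u, (∫ ω, Real.exp (θ * S v ω) ∂μ) *
          ∫ ω, Real.exp (-θ * I v ω) ∂μ :=
  peak_aoi_kernel_bound_general μ u T_I S I hTI hS hI hSI_indep hTI_indep T hne hT a θ hθ hintProd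
end
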